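/- Assume b > 0 and that N·I(N) ≠ 1 for every N ≥ 0 (the equation N·I(N) = 1 has no solutions). Then every firing rate sequence {N_{k,∞}} is monotone increasing and tends to +∞. -/

import Mathlib

/-!
The firing-rate recursion is the orbit `N_{k+1} = φ(N_k)` of the continuous map
`φ N = 1 / I(N)`, and a solution of `N·I(N) = 1` is exactly a fixed point of `φ`.
Since `φ 0 > 0` and `φ` has no fixed point on `[0, ∞)`, the intermediate value theorem
forces `N < φ N` for every `N ≥ 0`, so the orbit increases. A bounded increasing orbit
would converge to a fixed point of `φ` by continuity, hence the orbit tends to `+∞`.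
Continuity of `I` is dominated convergence: for `N` near `N₀` the integrand is bounded by
a Gaussian in `v` centred at `b N₀`.
-/

open MeasureTheory Real Filter Topology Set

/-- The function `I(N)` from the NNLIF model. -/
noncomputable def Ifun (b V_R V_F N : ℝ) : ℝ :=
  ∫ v in Set.Iic V_F,
    Real.exp (-(v - b * N) ^ 2 / 2) * ∫ w in (max v V_R)..V_F, Real.exp ((w - b * N) ^ 2 / 2)

section Orbit

variable {φ : ℝ → ℝ} {a : ℝ}

theorem lt_self_of_forall_ne_self (hφ : Continuous φ) (ha : a ≤ φ a)
    (hfix : ∀ x, a ≤ x → φ x ≠ x) {x : ℝ} (hx : a ≤ x) : x < φ x := by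
  by_contra! hle
  have hzero : (0 : ℝ) ∈ Icc (φ x - x) (φ a - a) := ⟨by linarith, by linarith⟩
  obtain ⟨c, hc, hc_fix⟩ :=
    intermediate_value_Icc' hx ((hφ.sub continuous_id).continuousOn) hzero
  exact hfix c hc.1 (sub_eq_zero.mp hc_fix)

variable {u : ℕ → ℝ}

theorem strictMono_of_lt_self (hlt : ∀ x, a ≤ x → x < φ x) (h0 : a ≤ u 0)
    (hrec : ∀ k, u (k + 1) = φ (u k)) : StrictMono u := by
  have hge : ∀ k, a ≤ u k := by
    intro k
    induction k with
    | zero => exact h0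
    | succ k ih => exact ih.trans (hrec k ▸ hlt _ ih).le
  exact strictMono_nat_of_lt_succ fun k => hrec k ▸ hlt _ (hge k)

theorem tendsto_atTop_of_lt_self (hφ : Continuous φ) (hlt : ∀ x, a ≤ x → x < φ x)
    (h0 : a ≤ u 0) (hrec : ∀ k, u (k + 1) = φ (u k)) : Tendsto u atTop atTop := by
  have hmono := (strictMono_of_lt_self hlt h0 hrec).monotone
  refine tendsto_atTop_atTop_of_monotone' hmono fun hbdd => ?_
  set L := ⨆ k, u k
  have hu : Tendsto u atTop (𝓝 L) := tendsto_atTop_ciSup hmono hbdd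
  have hφu : Tendsto (fun k => φ (u k)) atTop (𝓝 L) :=
    (hu.comp (tendsto_add_atTop_nat 1)).congr hrec
  have hfixL : φ L = L := tendsto_nhds_unique ((hφ.tendsto L).comp hu) hφu
  exact (hlt L (h0.trans (le_ciSup hbdd 0))).ne' hfixL

end Orbit

noncomputable def ifunIntegrand (b V_R V_F N v : ℝ) : ℝ :=
  exp (-(v - b * N) ^ 2 / 2) * ∫ w in (max v V_R)..V_F, exp ((w - b * N) ^ 2 / 2)

theorem Ifun_eq_integral_ifunIntegrand (b V_R V_F N : ℝ) :
    Ifun b V_R V_F N = ∫ v in Iic V_F, ifunIntegrand b V_R V_F N v := rfl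

section Integrand

variable {b V_R V_F : ℝ}

theorem continuous_ifunIntegrand (b V_R V_F : ℝ) :
    Continuous fun p : ℝ × ℝ => ifunIntegrand b V_R V_F p.1 p.2 := by
  unfold ifunIntegrand
  refine (by fun_prop : Continuous fun p : ℝ × ℝ => exp (-(p.2 - b * p.1) ^ 2 / 2)).mul ?_
  have hsymm : ∀ p : ℝ × ℝ, ∫ w in (max p.2 V_R)..V_F, exp ((w - b * p.1) ^ 2 / 2)
      = -∫ w in V_F..(max p.2 V_R), exp ((w - b * p.1) ^ 2 / 2) :=
    fun p => intervalIntegral.integral_symm _ _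
  simp only [hsymm]
  exact (intervalIntegral.continuous_parametric_intervalIntegral_of_continuous
    (f := fun (p : ℝ × ℝ) (w : ℝ) => exp ((w - b * p.1) ^ 2 / 2)) (by fun_prop)
    (continuous_snd.max continuous_const)).neg

theorem ifunIntegrand_nonneg (hV : V_R ≤ V_F) (N : ℝ) {v : ℝ} (hv : v ≤ V_F) :
    0 ≤ ifunIntegrand b V_R V_F N v :=
  mul_nonneg (exp_pos _).le
    (intervalIntegral.integral_nonneg (max_le hv hV) fun _ _ => (exp_pos _).le)

theorem ifunIntegrand_pos (hV : V_R < V_F) (N : ℝ) {v : ℝ} (hv : v < V_F) :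
    0 < ifunIntegrand b V_R V_F N v :=
  mul_pos (exp_pos _) <| intervalIntegral.intervalIntegral_pos_of_pos
    ((by fun_prop : Continuous fun w => exp ((w - b * N) ^ 2 / 2)).intervalIntegrable _ _)
    (fun _ => exp_pos _) (max_lt hv hV)

theorem exp_neg_sq_add_div_two_le (t d : ℝ) :
    exp (-(t + d) ^ 2 / 2) ≤ exp (d ^ 2) * exp (-(1 / 4) * t ^ 2) := by
  rw [← exp_add, exp_le_exp]
  nlinarith [sq_nonneg (t + 2 * d)]

theorem integral_exp_sq_div_two_le {l r s c A : ℝ} (hls : l ≤ s) (hsr : s ≤ r)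
    (hA : ∀ w ∈ Icc l r, |w - c| ≤ A) :
    ∫ w in s..r, exp ((w - c) ^ 2 / 2) ≤ (r - l) * exp (A ^ 2 / 2) := by
  have hint : IntervalIntegrable (fun w => exp ((w - c) ^ 2 / 2)) volume l r :=
    (by fun_prop : Continuous fun w => exp ((w - c) ^ 2 / 2)).intervalIntegrable _ _
  calc ∫ w in s..r, exp ((w - c) ^ 2 / 2)
      ≤ ∫ w in l..r, exp ((w - c) ^ 2 / 2) :=
        intervalIntegral.integral_mono_interval hls hsr le_rfl
          (Eventually.of_forall fun _ => (exp_pos _).le) hint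
    _ ≤ ∫ _ in l..r, exp (A ^ 2 / 2) :=
        intervalIntegral.integral_mono_on (hls.trans hsr) hint intervalIntegrable_const
          fun w hw => exp_le_exp.mpr <| div_le_div_of_nonneg_right
            (sq_le_sq' (abs_le.mp (hA w hw)).1 (abs_le.mp (hA w hw)).2) zero_le_two
    _ = (r - l) * exp (A ^ 2 / 2) := by simp

theorem exists_integrable_bound_ifunIntegrand (hV : V_R ≤ V_F) (b N₀ : ℝ) :
    ∃ g : ℝ → ℝ, Integrable g ∧ ∀ N, |N - N₀| ≤ 1 → ∀ v ≤ V_F,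
      ‖ifunIntegrand b V_R V_F N v‖ ≤ g v := by
  set A := |V_R| + |V_F| + |b| * (|N₀| + 1)
  refine ⟨fun v => exp (b ^ 2) * exp (-(1 / 4) * (v - b * N₀) ^ 2) *
    ((V_F - V_R) * exp (A ^ 2 / 2)),
    (((integrable_exp_neg_mul_sq (by norm_num)).comp_sub_right _).const_mul _).mul_const _, ?_⟩
  intro N hN v hv
  have hA : ∀ w ∈ Icc V_R V_F, |w - b * N| ≤ A := by
    intro w hw
    have hw_abs : |w| ≤ |V_R| + |V_F| :=
      abs_le.mpr ⟨by linarith [hw.1, neg_abs_le V_R, abs_nonneg V_F],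
        by linarith [hw.2, le_abs_self V_F, abs_nonneg V_R]⟩
    have hN_abs : |N| ≤ |N₀| + 1 := by linarith [abs_sub_abs_le_abs_sub N N₀]
    calc |w - b * N| ≤ |w| + |b| * |N| := (abs_sub _ _).trans_eq (by rw [abs_mul])
      _ ≤ A := by linarith [mul_le_mul_of_nonneg_left hN_abs (abs_nonneg b)]
  have hgauss :
      exp (-(v - b * N) ^ 2 / 2) ≤ exp (b ^ 2) * exp (-(1 / 4) * (v - b * N₀) ^ 2) := by
    have hd : (b * (N₀ - N)) ^ 2 ≤ b ^ 2 := by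
      rw [mul_pow]
      exact mul_le_of_le_one_right (sq_nonneg b)
        (sq_le_one_iff_abs_le_one _ |>.mpr (abs_sub_comm N₀ N ▸ hN))
    calc exp (-(v - b * N) ^ 2 / 2)
        = exp (-((v - b * N₀) + b * (N₀ - N)) ^ 2 / 2) := by ring_nf
      _ ≤ exp ((b * (N₀ - N)) ^ 2) * exp (-(1 / 4) * (v - b * N₀) ^ 2) :=
        exp_neg_sq_add_div_two_le _ _
      _ ≤ _ := by gcongr
  rw [norm_of_nonneg (ifunIntegrand_nonneg hV N hv)]
  exact mul_le_mul hgauss (integral_exp_sq_div_two_le (le_max_right _ _) (max_le hv hV) hA)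
    (intervalIntegral.integral_nonneg (max_le hv hV) fun _ _ => (exp_pos _).le) (by positivity)

theorem integrableOn_ifunIntegrand (hV : V_R ≤ V_F) (b N : ℝ) :
    IntegrableOn (ifunIntegrand b V_R V_F N) (Iic V_F) := by
  obtain ⟨g, hg, hbound⟩ := exists_integrable_bound_ifunIntegrand hV b N
  refine hg.integrableOn.mono' ?_ ?_
  · exact ((continuous_ifunIntegrand b V_R V_F).comp
      (continuous_const.prodMk continuous_id)).aestronglyMeasurable
  · exact (ae_restrict_iff' measurableSet_Iic).mpr <|
      Eventually.of_forall fun v hv => hbound N (by simp) v hv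

theorem Ifun_pos (hV : V_R < V_F) (b N : ℝ) : 0 < Ifun b V_R V_F N := by
  rw [Ifun_eq_integral_ifunIntegrand, setIntegral_pos_iff_support_of_nonneg_ae
    ((ae_restrict_iff' measurableSet_Iic).mpr <|
      Eventually.of_forall fun v hv => ifunIntegrand_nonneg hV.le N hv)
    (integrableOn_ifunIntegrand hV.le b N)]
  have hsupp : Iio V_F ⊆ Function.support (ifunIntegrand b V_R V_F N) ∩ Iic V_F :=
    fun v hv => ⟨(ifunIntegrand_pos hV N hv).ne', (mem_Iio.mp hv).le⟩
  exact (by simp : (0 : ENNReal) < volume (Iio V_F)).trans_le (measure_mono hsupp)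

theorem continuous_Ifun (hV : V_R ≤ V_F) (b : ℝ) : Continuous (Ifun b V_R V_F) := by
  refine continuous_iff_continuousAt.mpr fun N₀ => ?_
  obtain ⟨g, hg, hbound⟩ := exists_integrable_bound_ifunIntegrand hV b N₀
  have hnear : ∀ᶠ N in 𝓝 N₀, |N - N₀| ≤ 1 := by
    filter_upwards [Metric.closedBall_mem_nhds N₀ one_pos] with N hN
    simpa [Metric.mem_closedBall, Real.dist_eq] using hN
  refine continuousAt_of_dominated (bound := g) ?_ ?_ hg.integrableOn ?_
  · exact Eventually.of_forall fun N => ((continuous_ifunIntegrand b V_R V_F).comp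
      (continuous_const.prodMk continuous_id)).aestronglyMeasurable
  · filter_upwards [hnear] with N hN
    exact (ae_restrict_iff' measurableSet_Iic).mpr <|
      Eventually.of_forall fun v hv => hbound N hN v hv
  · exact Eventually.of_forall fun v => ((continuous_ifunIntegrand b V_R V_F).comp
      (continuous_id.prodMk continuous_const)).continuousAt

end Integrand

theorem firingRateSeq_no_equilibrium_general (b V_R V_F : ℝ) (hV : V_R < V_F)
    (hnosol : ∀ N : ℝ, 0 ≤ N → N * Ifun b V_R V_F N ≠ 1)
    (Nseq : ℕ → ℝ) (h0 : 0 ≤ Nseq 0)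
    (hrec : ∀ k : ℕ, Nseq (k + 1) = 1 / Ifun b V_R V_F (Nseq k)) :
    Monotone Nseq ∧ Tendsto Nseq atTop atTop := by
  set φ : ℝ → ℝ := fun N => 1 / Ifun b V_R V_F N
  have hI : ∀ N, 0 < Ifun b V_R V_F N := Ifun_pos hV b
  have hφ : Continuous φ :=
    continuous_const.div (continuous_Ifun hV.le b) fun N => (hI N).ne'
  have hfix : ∀ N, 0 ≤ N → φ N ≠ N := fun N hN hfixN =>
    hnosol N hN ((eq_div_iff (hI N).ne').mp hfixN.symm)
  have hlt : ∀ N, 0 ≤ N → N < φ N :=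
    fun N => lt_self_of_forall_ne_self hφ (one_div_pos.mpr (hI 0)).le hfix
  exact ⟨(strictMono_of_lt_self hlt h0 hrec).monotone, tendsto_atTop_of_lt_self hφ hlt h0 hrec⟩

/-- Case 2 of Theorem 2.3: `b > 0` and the equation `N·I(N) = 1` has no solutions on
`[0,∞)`. Then every firing rate sequence is monotone increasing and tends to `+∞`. -/
theorem firingRateSeq_no_equilibrium (b V_R V_F : ℝ) (hV : V_R < V_F) (hb : 0 < b)
    (hnosol : ∀ N : ℝ, 0 ≤ N → N * Ifun b V_R V_F N ≠ 1)
    (Nseq : ℕ → ℝ) (h0 : 0 ≤ Nseq 0)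
    (hrec : ∀ k : ℕ, Nseq (k + 1) = 1 / Ifun b V_R V_F (Nseq k)) :
    Monotone Nseq ∧ Tendsto Nseq atTop atTop :=
  firingRateSeq_no_equilibrium_general b V_R V_F hV hnosol Nseq h0 hrec
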